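/- For all positive integers a and δ, the identity s_δ(a) = ∑_{d | δ} J₂(d)·σ̄^d(a) holds, where s_δ(a) = ∑_{k² | a} gcd(k,δ)·gcd(a/k,δ)·ψ(a/k²), J₂ is the second Jordan totient function, and σ̄^d(a) = σ(a/d) if d | a and 0 otherwise. -/

import Mathlib

/-!
Both sides are multiplicative in `a`: each has the form `∑_{d ∣ a} F d (a / d)` for a kernel `F`
that is multiplicative in both arguments jointly (for `s_δ`, write `a = k m` with `k ∣ m`).
So it suffices to take `a = p^α`. With `β = v_p(δ)` both sides become polynomials in `p`;
each reduces to `σ(p^α)` when `β = 0`, and each satisfies `X(α+1, β+1) = p^(α+1) + p² X(α, β)`.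
For the right side this comes from `J₂(p) = p² - 1` and `J₂(p^(j+1)) = p² J₂(p^j)` for `j ≥ 1`;
for the left side it follows by two-step induction on `α` from
`L(α+2, β+1) = p^min(α+2, β+1) ψ(p^(α+2)) + p² L(α, β)`, obtained by splitting off the term `k = 1`.
-/

open Finset

/-- The Dedekind psi function: `ψ = Id * μ²`. -/
def dedekindPsi (n : ℕ) : ℕ := ∑ d ∈ n.divisors, if Squarefree d then n / d else 0

/-- `s_δ(a) = ∑_{k² ∣ a} gcd(k,δ)·gcd(a/k,δ)·ψ(a/k²)`. -/
def sLocal (δ a : ℕ) : ℕ :=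
  ∑ k ∈ a.divisors.filter (fun k => k ^ 2 ∣ a),
    Nat.gcd k δ * Nat.gcd (a / k) δ * dedekindPsi (a / k ^ 2)

/-- The second Jordan totient `J₂ = μ * Id²`. -/
def J2 (n : ℕ) : ℤ := ∑ d ∈ n.divisors, ArithmeticFunction.moebius d * ((n / d : ℕ) : ℤ) ^ 2

/-- `σ̄^d(a) = σ(a/d)` if `d ∣ a`, and `0` otherwise. -/
def sigmaBar (d a : ℕ) : ℤ := if d ∣ a then ∑ e ∈ (a / d).divisors, (e : ℤ) else 0

open ArithmeticFunction

theorem Nat.Coprime.sum_divisors_mul_eq_sum_sum {M : Type*} [AddCommMonoid M] {m n : ℕ}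
    (h : m.Coprime n) (f : ℕ → M) :
    ∑ d ∈ (m * n).divisors, f d = ∑ i ∈ m.divisors, ∑ j ∈ n.divisors, f (i * j) := by
  rw [h.divisors_mul, sum_map, ← sum_product']
  exact sum_attach _ fun x : ℕ × ℕ => f (x.1 * x.2)

theorem Nat.Coprime.mul_dvd_mul_iff {k k' m m' : ℕ} (hkm' : k.Coprime m') (hk'm : k'.Coprime m) :
    k * k' ∣ m * m' ↔ k ∣ m ∧ k' ∣ m' :=
  ⟨fun h => ⟨hkm'.dvd_of_dvd_mul_right ((Nat.dvd_mul_right k k').trans h),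
      hk'm.dvd_of_dvd_mul_left ((Nat.dvd_mul_left k' k).trans h)⟩,
    fun h => mul_dvd_mul h.1 h.2⟩

theorem Nat.Prime.gcd_pow_eq {p n : ℕ} (hp : p.Prime) (hn : n ≠ 0) (i : ℕ) :
    Nat.gcd (p ^ i) n = p ^ min i (n.factorization p) := by
  obtain ⟨j, -, hj⟩ := (Nat.dvd_prime_pow hp).1 (Nat.gcd_dvd_left (p ^ i) n)
  have hji : j ≤ i := (Nat.pow_dvd_pow_iff_le_right hp.one_lt).1 (hj ▸ Nat.gcd_dvd_left _ _)
  have hjn : j ≤ n.factorization p :=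
    (hp.pow_dvd_iff_le_factorization hn).1 (hj ▸ Nat.gcd_dvd_right _ _)
  refine dvd_antisymm ?_ (Nat.dvd_gcd (Nat.pow_dvd_pow p (min_le_left _ _))
    ((hp.pow_dvd_iff_le_factorization hn).2 (min_le_right _ _)))
  rw [hj]
  exact Nat.pow_dvd_pow p (le_min hji hjn)

theorem Nat.Coprime.gcd_mul_eq {m n : ℕ} (h : m.Coprime n) (k : ℕ) :
    Nat.gcd (m * n) k = Nat.gcd m k * Nat.gcd n k := by
  rw [Nat.gcd_comm, h.gcd_mul, Nat.gcd_comm k, Nat.gcd_comm k]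

theorem Nat.Coprime.sum_divisors_cast_mul {R : Type*} [CommSemiring R] {m n : ℕ}
    (h : m.Coprime n) :
    ∑ x ∈ (m * n).divisors, (x : R) = (∑ x ∈ m.divisors, (x : R)) * ∑ x ∈ n.divisors, (x : R) := by
  rw [← Nat.cast_sum, ← Nat.cast_sum, ← Nat.cast_sum, h.sum_divisors_mul, Nat.cast_mul]

namespace ArithmeticFunction

variable {R : Type*}

/-- Dirichlet convolution is the case `F d e = f d * g e`. -/
def divisorSum [AddCommMonoid R] (F : ℕ → ℕ → R) : ArithmeticFunction R :=
  ⟨fun n => ∑ d ∈ n.divisors, F d (n / d), by simp⟩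

@[simp]
theorem divisorSum_apply [AddCommMonoid R] (F : ℕ → ℕ → R) (n : ℕ) :
    divisorSum F n = ∑ d ∈ n.divisors, F d (n / d) :=
  rfl

theorem divisorSum_prime_pow [AddCommMonoid R] (F : ℕ → ℕ → R) {p : ℕ} (hp : p.Prime) (α : ℕ) :
    divisorSum F (p ^ α) = ∑ i ∈ range (α + 1), F (p ^ i) (p ^ (α - i)) := by
  rw [divisorSum_apply, Nat.sum_divisors_prime_pow hp]
  refine sum_congr rfl fun i hi => ?_
  rw [Nat.pow_div (Nat.lt_succ_iff.1 (mem_range.1 hi)) hp.pos]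

theorem isMultiplicative_divisorSum [CommSemiring R] {F : ℕ → ℕ → R} (h₁ : F 1 1 = 1)
    (hF : ∀ {d e d' e' : ℕ}, (d * e).Coprime (d' * e') → F (d * d') (e * e') = F d e * F d' e') :
    IsMultiplicative (divisorSum F) := by
  refine ⟨by simp [h₁], fun {m n} hmn => ?_⟩
  simp only [divisorSum_apply]
  rw [hmn.sum_divisors_mul_eq_sum_sum, sum_mul_sum]
  refine sum_congr rfl fun i hi => sum_congr rfl fun j hj => ?_
  have hi := Nat.dvd_of_mem_divisors hi
  have hj := Nat.dvd_of_mem_divisors hj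
  rw [← Nat.div_mul_div_comm hi hj]
  exact hF (by rwa [Nat.mul_div_cancel' hi, Nat.mul_div_cancel' hj])

end ArithmeticFunction

theorem dedekindPsi_eq_divisorSum (n : ℕ) :
    dedekindPsi n = divisorSum (fun d e => if Squarefree d then e else 0) n :=
  rfl

theorem J2_eq_divisorSum (n : ℕ) :
    J2 n = divisorSum (fun d e => moebius d * (e : ℤ) ^ 2) n :=
  rfl

theorem dedekindPsi_mul {m n : ℕ} (h : m.Coprime n) :
    dedekindPsi (m * n) = dedekindPsi m * dedekindPsi n := by
  simp only [dedekindPsi_eq_divisorSum]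
  refine (isMultiplicative_divisorSum (by simp) fun {d e d' e'} hc => ?_).map_mul_of_coprime h
  simp only [Nat.squarefree_mul hc.coprime_mul_right.coprime_mul_right_right]
  split_ifs <;> simp_all

theorem J2_mul {m n : ℕ} (h : m.Coprime n) : J2 (m * n) = J2 m * J2 n := by
  simp only [J2_eq_divisorSum]
  refine (isMultiplicative_divisorSum (by simp) fun {d e d' e'} hc => ?_).map_mul_of_coprime h
  rw [isMultiplicative_moebius.map_mul_of_coprime hc.coprime_mul_right.coprime_mul_right_right]
  push_cast
  ring

section PrimePower

variable {R : Type*} [CommRing R] (q : R)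

def psiPow : ℕ → R
  | 0 => 1
  | m + 1 => q ^ (m + 1) + q ^ m

def jordanPow : ℕ → R
  | 0 => 1
  | j + 1 => q ^ (2 * j + 2) - q ^ (2 * j)

/-- For a prime `p` with `v_p(δ) = β`, `s_δ(p^α) = sLocalPoly p α β`. -/
def sLocalPoly (α β : ℕ) : R :=
  ∑ i ∈ range (α / 2 + 1), q ^ min i β * q ^ min (α - i) β * psiPow q (α - 2 * i)

/-- For a prime `p` with `v_p(δ) = β`, `∑_{d ∣ δ} J₂(d) σ̄^d(p^α) = jordanSigmaPoly p α β`. -/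
def jordanSigmaPoly (α β : ℕ) : R :=
  ∑ j ∈ range (α + 1), if j ≤ β then jordanPow q j * ∑ t ∈ range (α - j + 1), q ^ t else 0

theorem sLocalPoly_add_two_zero (α : ℕ) :
    sLocalPoly q (α + 2) 0 = psiPow q (α + 2) + sLocalPoly q α 0 := by
  rw [sLocalPoly, show (α + 2) / 2 + 1 = α / 2 + 1 + 1 by omega, sum_range_succ', add_comm,
    sLocalPoly]
  simp only [Nat.min_zero, pow_zero, one_mul, mul_zero, Nat.sub_zero]
  congr 1
  refine sum_congr rfl fun i _ => ?_
  rw [show α + 2 - 2 * (i + 1) = α - 2 * i by omega]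

theorem sLocalPoly_add_two_succ (α β : ℕ) :
    sLocalPoly q (α + 2) (β + 1) =
      q ^ min (α + 2) (β + 1) * psiPow q (α + 2) + q ^ 2 * sLocalPoly q α β := by
  rw [sLocalPoly, show (α + 2) / 2 + 1 = α / 2 + 1 + 1 by omega, sum_range_succ', add_comm,
    sLocalPoly, mul_sum]
  simp only [Nat.zero_min, pow_zero, one_mul, mul_zero, Nat.sub_zero]
  congr 1
  refine sum_congr rfl fun i hi => ?_
  have hiα : i ≤ α := by have := mem_range.1 hi; omega
  rw [show α + 2 - 2 * (i + 1) = α - 2 * i by omega, show α + 2 - (i + 1) = α - i + 1 by omega,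
    Nat.add_min_add_right, Nat.add_min_add_right]
  ring

theorem sLocalPoly_zero_right : ∀ α : ℕ, sLocalPoly q α 0 = ∑ t ∈ range (α + 1), q ^ t
  | 0 => by simp [sLocalPoly, psiPow]
  | 1 => by simp [sLocalPoly, psiPow, sum_range_succ]; ring
  | α + 2 => by
    rw [sLocalPoly_add_two_zero, sLocalPoly_zero_right α, sum_range_succ _ (α + 2),
      sum_range_succ _ (α + 1), psiPow]
    ring

theorem sLocalPoly_succ_succ :
    ∀ α β : ℕ, sLocalPoly q (α + 1) (β + 1) = q ^ (α + 1) + q ^ 2 * sLocalPoly q α β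
  | 0, β => by simp [sLocalPoly, psiPow]; ring
  | 1, β => by
    rw [sLocalPoly_add_two_succ, show min (0 + 2) (β + 1) = min 1 β + 1 by omega]
    simp [sLocalPoly, psiPow]
    ring
  | α + 2, 0 => by
    rw [sLocalPoly_add_two_succ, sLocalPoly_zero_right, sLocalPoly_zero_right,
      sum_range_succ _ (α + 2), psiPow, show min (α + 1 + 2) (0 + 1) = 1 by omega]
    ring
  | α + 2, β + 1 => by
    rw [sLocalPoly_add_two_succ, sLocalPoly_succ_succ α β, sLocalPoly_add_two_succ,
      show min (α + 1 + 2) (β + 1 + 1) = min (α + 2) (β + 1) + 1 by omega, psiPow, psiPow]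
    ring

theorem jordanSigmaPoly_zero_right (α : ℕ) :
    jordanSigmaPoly q α 0 = ∑ t ∈ range (α + 1), q ^ t := by
  rw [jordanSigmaPoly, sum_range_succ']
  simp [jordanPow]

theorem jordanSigmaPoly_succ_succ (α β : ℕ) :
    jordanSigmaPoly q (α + 1) (β + 1) = q ^ (α + 1) + q ^ 2 * jordanSigmaPoly q α β := by
  have hJ : ∀ k, jordanPow q (k + 1 + 1) = q ^ 2 * jordanPow q (k + 1) := fun k => by
    simp only [jordanPow]
    ring
  rw [jordanSigmaPoly, jordanSigmaPoly, sum_range_succ' _ (α + 1), sum_range_succ' _ α,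
    sum_range_succ' _ α]
  simp only [add_le_add_iff_right, zero_le, if_true, Nat.add_sub_add_right, Nat.sub_zero, hJ,
    mul_assoc, ← mul_ite_zero]
  rw [← mul_sum, sum_range_succ _ (α + 1)]
  simp only [jordanPow]
  ring

theorem sLocalPoly_eq_jordanSigmaPoly : ∀ α β : ℕ, sLocalPoly q α β = jordanSigmaPoly q α β
  | α, 0 => by rw [sLocalPoly_zero_right, jordanSigmaPoly_zero_right]
  | 0, β + 1 => by simp [sLocalPoly, jordanSigmaPoly, psiPow, jordanPow]
  | α + 1, β + 1 => by
    rw [sLocalPoly_succ_succ, jordanSigmaPoly_succ_succ, sLocalPoly_eq_jordanSigmaPoly α β]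

end PrimePower

theorem dedekindPsi_prime_pow {p : ℕ} (hp : p.Prime) (m : ℕ) :
    (dedekindPsi (p ^ m) : ℤ) = psiPow (p : ℤ) m := by
  rw [dedekindPsi_eq_divisorSum, divisorSum_prime_pow _ hp]
  cases m with
  | zero => simp [psiPow, filter_singleton]
  | succ m =>
    have hsq : ∀ k, ¬ Squarefree (p ^ (k + 1 + 1)) := fun k h =>
      absurd ((Nat.squarefree_pow_iff hp.ne_one (by omega)).1 h).2 (by omega)
    rw [sum_range_succ', sum_range_succ']
    simp [hsq, hp.squarefree, psiPow]
    ring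

theorem J2_prime_pow {p : ℕ} (hp : p.Prime) (j : ℕ) : J2 (p ^ j) = jordanPow (p : ℤ) j := by
  rw [J2_eq_divisorSum, divisorSum_prime_pow _ hp]
  cases j with
  | zero => simp [jordanPow]
  | succ j =>
    rw [sum_range_succ', sum_range_succ']
    simp [moebius_apply_prime_pow hp, moebius_apply_prime hp, jordanPow]
    ring

/-- With `m = a / k`, the condition `k² ∣ a` of `sLocal` reads `k ∣ m`. -/
def sLocalKernel (δ k m : ℕ) : ℕ :=
  if k ∣ m then Nat.gcd k δ * Nat.gcd m δ * dedekindPsi (m / k) else 0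

def jordanSigmaKernel (δ d e : ℕ) : ℤ :=
  if d ∣ δ then J2 d * ∑ x ∈ e.divisors, (x : ℤ) else 0

theorem sLocal_eq_divisorSum (δ a : ℕ) : sLocal δ a = divisorSum (sLocalKernel δ) a := by
  rw [sLocal, sum_filter, divisorSum_apply]
  refine sum_congr rfl fun k hk => ?_
  have hk := Nat.dvd_of_mem_divisors hk
  simp only [sLocalKernel, Nat.dvd_div_iff_mul_dvd hk, Nat.div_div_eq_div_mul, ← sq]

theorem sum_J2_mul_sigmaBar_eq_divisorSum {δ : ℕ} (hδ : δ ≠ 0) (a : ℕ) :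
    ∑ d ∈ δ.divisors, J2 d * sigmaBar d a = divisorSum (jordanSigmaKernel δ) a := by
  rcases eq_or_ne a 0 with rfl | ha
  · simp [sigmaBar]
  simp only [divisorSum_apply, jordanSigmaKernel, sigmaBar, mul_ite, mul_zero]
  rw [← sum_filter, ← sum_filter]
  congr 1
  ext d
  simp only [mem_filter, Nat.mem_divisors]
  tauto

theorem isMultiplicative_divisorSum_sLocalKernel (δ : ℕ) :
    IsMultiplicative (divisorSum (sLocalKernel δ)) := by
  refine isMultiplicative_divisorSum (by simp [sLocalKernel, dedekindPsi]) fun {k m k' m'} h => ?_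
  have hkm' : k.Coprime m' := h.coprime_mul_right.coprime_mul_left_right
  have hk'm : k'.Coprime m := h.symm.coprime_mul_right.coprime_mul_left_right
  have hmm' : m.Coprime m' := h.coprime_mul_left.coprime_mul_left_right
  simp only [sLocalKernel, hkm'.mul_dvd_mul_iff hk'm]
  split_ifs with hdvd
  · rw [← Nat.div_mul_div_comm hdvd.1 hdvd.2,
      dedekindPsi_mul ((hmm'.coprime_dvd_left (Nat.div_dvd_of_dvd hdvd.1)).coprime_dvd_right
        (Nat.div_dvd_of_dvd hdvd.2)),
      (h.coprime_mul_right.coprime_mul_right_right).gcd_mul_eq, hmm'.gcd_mul_eq]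
    ring
  all_goals simp_all

theorem isMultiplicative_divisorSum_jordanSigmaKernel (δ : ℕ) :
    IsMultiplicative (divisorSum (jordanSigmaKernel δ)) := by
  refine isMultiplicative_divisorSum (by simp [jordanSigmaKernel, J2]) fun {d e d' e'} h => ?_
  have hdd' : d.Coprime d' := h.coprime_mul_right.coprime_mul_right_right
  have hdvd : d * d' ∣ δ ↔ d ∣ δ ∧ d' ∣ δ := by rw [← hdd'.lcm_eq_mul, Nat.lcm_dvd_iff]
  simp only [jordanSigmaKernel, hdvd]
  split_ifs
  · rw [J2_mul hdd', h.coprime_mul_left.coprime_mul_left_right.sum_divisors_cast_mul]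
    ring
  all_goals simp_all

theorem sLocal_prime_pow {p δ : ℕ} (hp : p.Prime) (hδ : δ ≠ 0) (α : ℕ) :
    (sLocal δ (p ^ α) : ℤ) = sLocalPoly (p : ℤ) α (δ.factorization p) := by
  have hterm : ∀ i ∈ range (α + 1), (sLocalKernel δ (p ^ i) (p ^ (α - i)) : ℤ) =
      if i ∈ range (α / 2 + 1) then
        (p : ℤ) ^ min i (δ.factorization p) * (p : ℤ) ^ min (α - i) (δ.factorization p) *
          psiPow (p : ℤ) (α - 2 * i)
      else 0 := by
    intro i hi
    have hi := mem_range.1 hi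
    simp only [sLocalKernel, Nat.pow_dvd_pow_iff_le_right hp.one_lt, mem_range]
    split_ifs with h₁ h₂ h₂
    · rw [Nat.pow_div h₁ hp.pos, hp.gcd_pow_eq hδ, hp.gcd_pow_eq hδ,
        show α - i - i = α - 2 * i by omega]
      push_cast
      rw [dedekindPsi_prime_pow hp]
    · omega
    · omega
    · rfl
  rw [sLocal_eq_divisorSum, divisorSum_prime_pow _ hp, Nat.cast_sum, sum_congr rfl hterm,
    sum_ite_mem, inter_eq_right.2 (range_subset_range.2 (by omega)), sLocalPoly]

theorem sum_J2_mul_sigmaBar_prime_pow {p δ : ℕ} (hp : p.Prime) (hδ : δ ≠ 0) (α : ℕ) :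
    ∑ d ∈ δ.divisors, J2 d * sigmaBar d (p ^ α) =
      jordanSigmaPoly (p : ℤ) α (δ.factorization p) := by
  rw [sum_J2_mul_sigmaBar_eq_divisorSum hδ, divisorSum_prime_pow _ hp, jordanSigmaPoly]
  refine sum_congr rfl fun j _ => ?_
  simp only [jordanSigmaKernel, hp.pow_dvd_iff_le_factorization hδ, J2_prime_pow hp,
    Nat.sum_divisors_prime_pow hp]
  push_cast
  rfl

theorem sLocal_eq_sum_J2_sigmaBar_general (a δ : ℕ) (hδ : 0 < δ) :
    (sLocal δ a : ℤ) = ∑ d ∈ δ.divisors, J2 d * sigmaBar d a := by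
  have key : ((divisorSum (sLocalKernel δ) : ArithmeticFunction ℕ) : ArithmeticFunction ℤ) =
      divisorSum (jordanSigmaKernel δ) := by
    refine (IsMultiplicative.eq_iff_eq_on_prime_powers _
      (isMultiplicative_divisorSum_sLocalKernel δ).natCast _
      (isMultiplicative_divisorSum_jordanSigmaKernel δ)).2 fun p α hp => ?_
    rw [natCoe_apply, ← sLocal_eq_divisorSum, ← sum_J2_mul_sigmaBar_eq_divisorSum hδ.ne',
      sLocal_prime_pow hp hδ.ne', sum_J2_mul_sigmaBar_prime_pow hp hδ.ne',
      sLocalPoly_eq_jordanSigmaPoly]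
  rw [sLocal_eq_divisorSum, sum_J2_mul_sigmaBar_eq_divisorSum hδ.ne', ← key, natCoe_apply]

/-- `s_δ(a) = ∑_{d ∣ δ} J₂(d)·σ̄^d(a)`. -/
theorem sLocal_eq_sum_J2_sigmaBar (a δ : ℕ) (ha : 0 < a) (hδ : 0 < δ) :
    (sLocal δ a : ℤ) = ∑ d ∈ δ.divisors, J2 d * sigmaBar d a :=
  sLocal_eq_sum_J2_sigmaBar_general a δ hδ
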